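/- arXiv:2603.24519 — 2 statements merged into one kernel-verified Lean document; each statement's English description precedes it below -/
import Mathlib

section
/- For every s₁ ∈ U there exist an open neighborhood V ⊆ U of s₁, a holomorphic function f : V → ℂ not identically zero with S ∩ V = f⁻¹(0), and analytic families of bounded operators H : V → L(F, E) and R : V → L(F, E) such that R(s) has finite rank for every s ∈ V, and such that for every s ∈ V with f(s) ≠ 0 the operator H(s) + f(s)⁻¹·R(s) is a two-sided inverse of P(s); in other words, s ↦ P(s)⁻¹ is locally the sum of a holomorphic operator family and a finite-rank operator family divided by a holomorphic scalar function. -/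
/-!
Near `s₁`, border `P s` by a continuous projection `π` onto `N = ker P(s₁)` and by the inclusion
`ι` of a complement `W` of `range P(s₁)`: the operator `T s = [[P s, ι], [π, 0]] : E × W → F × N`
is invertible at `s₁`, hence on a ball around it, with analytic inverse `[[A, B], [C, D]]`.
By the Schur complement formula `P s` is invertible iff the block `D s : N → W` between
finite-dimensional spaces is, and then `(P s)⁻¹ = A - B (D s)⁻¹ C`. Cramer's rule
`(D s)⁻¹ = adj (D s) / det (D s)` gives `f = det D`, `H = A` and `R = -B adj(D) C`.
Since `f` is analytic, the identity theorem makes the set of points near which `P` is nowhere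
invertible open and closed in `U`; it misses `s₀`, so `f` vanishes identically on no such ball.
-/

open ContinuousLinearMap Filter Set Topology Module

section Analytic

variable {𝕜 : Type*} [NontriviallyNormedField 𝕜] {Z X Y W : Type*}
  [NormedAddCommGroup Z] [NormedSpace 𝕜 Z]
  [NormedAddCommGroup X] [NormedSpace 𝕜 X]
  [NormedAddCommGroup Y] [NormedSpace 𝕜 Y]
  [NormedAddCommGroup W] [NormedSpace 𝕜 W]

@[fun_prop]
theorem AnalyticAt.clm_comp {f : Z → X →L[𝕜] Y} {g : Z → W →L[𝕜] X} {s : Z}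
    (hf : AnalyticAt 𝕜 f s) (hg : AnalyticAt 𝕜 g s) :
    AnalyticAt 𝕜 (fun t => (f t).comp (g t)) s :=
  ((compL 𝕜 W X Y).analyticAt_bilinear (f s, g s)).comp₂ hf hg

@[fun_prop]
theorem AnalyticAt.clm_apply {f : Z → X →L[𝕜] Y} {g : Z → X} {s : Z}
    (hf : AnalyticAt 𝕜 f s) (hg : AnalyticAt 𝕜 g s) :
    AnalyticAt 𝕜 (fun t => f t (g t)) s :=
  ((apply 𝕜 Y).flip.analyticAt_bilinear (f s, g s)).comp₂ hf hg

theorem analyticAt_inverse_equiv [CompleteSpace X] (e : X ≃L[𝕜] Y) :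
    AnalyticAt 𝕜 inverse (e : X →L[𝕜] Y) := by
  have hinv : (inverse : (X →L[𝕜] Y) → Y →L[𝕜] X) =
      fun f => Ring.inverse ((e.symm : Y →L[𝕜] X).comp f) ∘L (e.symm : Y →L[𝕜] X) :=
    funext (inverse_eq_ringInverse e)
  have hone : (e.symm : Y →L[𝕜] X).comp (e : X →L[𝕜] Y) = ((1 : (X →L[𝕜] X)ˣ) : X →L[𝕜] X) := by
    ext; simp
  rw [hinv]
  have hring : AnalyticAt 𝕜 Ring.inverse ((e.symm : Y →L[𝕜] X).comp (e : X →L[𝕜] Y)) :=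
    hone ▸ analyticAt_inverse 1
  exact (hring.comp (by fun_prop)).clm_comp analyticAt_const

theorem exists_ball_analyticOnNhd_inverse [CompleteSpace X] {U : Set Z} (hU : IsOpen U)
    {T : Z → X →L[𝕜] Y} (hT : AnalyticOnNhd 𝕜 T U) {s₁ : Z} (hs₁ : s₁ ∈ U)
    (hinv : (T s₁).IsInvertible) :
    ∃ ε > 0, Metric.ball s₁ ε ⊆ U ∧ (∀ s ∈ Metric.ball s₁ ε, (T s).IsInvertible) ∧
      AnalyticOnNhd 𝕜 (fun s => (T s).inverse) (Metric.ball s₁ ε) := by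
  have hnhds : U ∩ T ⁻¹' range ((↑) : (X ≃L[𝕜] Y) → X →L[𝕜] Y) ∈ 𝓝 s₁ :=
    inter_mem (hU.mem_nhds hs₁) <| (hT s₁ hs₁).continuousAt.preimage_mem_nhds <|
      ContinuousLinearEquiv.isOpen.mem_nhds hinv
  obtain ⟨ε, hε, hball⟩ := Metric.mem_nhds_iff.1 hnhds
  refine ⟨ε, hε, fun s hs => (hball hs).1, fun s hs => (hball hs).2, fun s hs => ?_⟩
  obtain ⟨e, he⟩ := (hball hs).2
  exact (he ▸ analyticAt_inverse_equiv e).comp (hT s (hball hs).1)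

end Analytic

section Block

variable {𝕜 : Type*} [NontriviallyNormedField 𝕜] {X₁ X₂ Y₁ Y₂ : Type*}
  [NormedAddCommGroup X₁] [NormedSpace 𝕜 X₁] [NormedAddCommGroup X₂] [NormedSpace 𝕜 X₂]
  [NormedAddCommGroup Y₁] [NormedSpace 𝕜 Y₁] [NormedAddCommGroup Y₂] [NormedSpace 𝕜 Y₂]

def blockOp (A : X₁ →L[𝕜] Y₁) (B : X₂ →L[𝕜] Y₁) (C : X₁ →L[𝕜] Y₂) (D : X₂ →L[𝕜] Y₂) :
    X₁ × X₂ →L[𝕜] Y₁ × Y₂ :=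
  (A.coprod B).prod (C.coprod D)

@[simp]
theorem blockOp_apply (A : X₁ →L[𝕜] Y₁) (B : X₂ →L[𝕜] Y₁) (C : X₁ →L[𝕜] Y₂)
    (D : X₂ →L[𝕜] Y₂) (x : X₁ × X₂) :
    blockOp A B C D x = (A x.1 + B x.2, C x.1 + D x.2) :=
  rfl

theorem eq_blockOp (S : X₁ × X₂ →L[𝕜] Y₁ × Y₂) :
    S = blockOp (fst 𝕜 Y₁ Y₂ ∘L S ∘L inl 𝕜 X₁ X₂) (fst 𝕜 Y₁ Y₂ ∘L S ∘L inr 𝕜 X₁ X₂)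
      (snd 𝕜 Y₁ Y₂ ∘L S ∘L inl 𝕜 X₁ X₂) (snd 𝕜 Y₁ Y₂ ∘L S ∘L inr 𝕜 X₁ X₂) := by
  refine ContinuousLinearMap.ext fun x => ?_
  rw [blockOp_apply]
  conv_lhs => rw [← Prod.fst_add_snd x, map_add]
  rfl

@[fun_prop]
theorem AnalyticAt.blockOp {Z : Type*} [NormedAddCommGroup Z] [NormedSpace 𝕜 Z]
    {A : Z → X₁ →L[𝕜] Y₁} {B : Z → X₂ →L[𝕜] Y₁} {C : Z → X₁ →L[𝕜] Y₂} {D : Z → X₂ →L[𝕜] Y₂}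
    {s : Z} (hA : AnalyticAt 𝕜 A s) (hB : AnalyticAt 𝕜 B s) (hC : AnalyticAt 𝕜 C s)
    (hD : AnalyticAt 𝕜 D s) :
    AnalyticAt 𝕜 (fun t => _root_.blockOp (A t) (B t) (C t) (D t)) s := by
  have hsum : (fun t => _root_.blockOp (A t) (B t) (C t) (D t)) = fun t =>
      inl 𝕜 Y₁ Y₂ ∘L (A t ∘L fst 𝕜 X₁ X₂ + B t ∘L snd 𝕜 X₁ X₂) +
        inr 𝕜 Y₁ Y₂ ∘L (C t ∘L fst 𝕜 X₁ X₂ + D t ∘L snd 𝕜 X₁ X₂) := by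
    funext t
    refine ContinuousLinearMap.ext fun x => ?_
    simp
  rw [hsum]
  fun_prop

variable {E F E₀ F₀ : Type*}
  [NormedAddCommGroup E] [NormedSpace 𝕜 E] [NormedAddCommGroup F] [NormedSpace 𝕜 F]
  [NormedAddCommGroup E₀] [NormedSpace 𝕜 E₀] [NormedAddCommGroup F₀] [NormedSpace 𝕜 F₀]

theorem bijective_blockOp_of_isCompl {P : E →L[𝕜] F} {W : Submodule 𝕜 F}
    (hW : IsCompl (LinearMap.range (P : E →ₗ[𝕜] F)) W)
    {π : E →L[𝕜] LinearMap.ker (P : E →ₗ[𝕜] F)}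
    (hπ : ∀ x : LinearMap.ker (P : E →ₗ[𝕜] F), π x = x) :
    Function.Bijective (blockOp P W.subtypeL π 0) := by
  refine ⟨(injective_iff_map_eq_zero _).2 fun ⟨x, y⟩ h => ?_, fun ⟨z, w⟩ => ?_⟩
  · simp only [blockOp_apply, Submodule.subtypeL_apply, zero_apply, add_zero,
      Prod.mk_eq_zero] at h
    have hPx : P x = 0 := by
      have hmem : P x ∈ LinearMap.range (P : E →ₗ[𝕜] F) ⊓ W :=
        ⟨⟨x, rfl⟩, eq_neg_of_add_eq_zero_left h.1 ▸ W.neg_mem y.2⟩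
      rwa [hW.inf_eq_bot, Submodule.mem_bot] at hmem
    have hx : x = 0 := by
      simpa [h.2] using (congrArg Subtype.val (hπ ⟨x, hPx⟩)).symm
    exact Prod.ext hx (Subtype.ext (by simpa [hx] using h.1))
  · obtain ⟨_, ⟨x, rfl⟩, c, hc, hz⟩ :=
      Submodule.mem_sup.1 (hW.sup_eq_top ▸ Submodule.mem_top (x := z))
    refine ⟨(x - π x + w, ⟨c, hc⟩), ?_⟩
    have hker : ∀ v : LinearMap.ker (P : E →ₗ[𝕜] F), P v = 0 := fun v => v.2
    simp only [coe_coe] at hz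
    simp [hker, hπ, hz]

variable {P : E →L[𝕜] F} {j : F₀ →L[𝕜] F} {π : E →L[𝕜] E₀}
  {A : F →L[𝕜] E} {B : E₀ →L[𝕜] E} {C : F →L[𝕜] F₀} {D : E₀ →L[𝕜] F₀}

theorem bijective_of_blockOp_inverse (hTS : blockOp P j π 0 ∘L blockOp A B C D = .id 𝕜 _)
    (hST : blockOp A B C D ∘L blockOp P j π 0 = .id 𝕜 _) (hP : Function.Bijective P) :
    Function.Bijective D := by
  refine ⟨(injective_iff_map_eq_zero D).2 fun w hw => ?_, fun y => ?_⟩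
  · have h := congr($hTS (0, w))
    simp only [comp_apply, blockOp_apply, map_zero, zero_add, hw, add_zero, id_apply,
      Prod.mk.injEq] at h
    rw [← h.2, hP.1 (h.1.trans (map_zero P).symm), map_zero]
  · obtain ⟨x, hx⟩ := hP.2 (-j y)
    have h := congr($hST (x, y))
    simp only [comp_apply, blockOp_apply, hx, neg_add_cancel, map_zero, zero_add, zero_apply,
      add_zero, id_apply, Prod.mk.injEq] at h
    exact ⟨π x, h.2⟩

theorem comp_eq_id_of_blockOp_inverse (hTS : blockOp P j π 0 ∘L blockOp A B C D = .id 𝕜 _)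
    (hST : blockOp A B C D ∘L blockOp P j π 0 = .id 𝕜 _) {K : F₀ →L[𝕜] E₀}
    (hDK : D ∘L K = .id 𝕜 _) (hKD : K ∘L D = .id 𝕜 _) :
    P ∘L (A - B ∘L K ∘L C) = .id 𝕜 _ ∧ (A - B ∘L K ∘L C) ∘L P = .id 𝕜 _ := by
  constructor
  · ext z
    have h := congr($hTS (z, -K (C z)))
    have hDK' := congr($hDK (C z))
    simp only [comp_apply, id_apply] at hDK'
    simp only [comp_apply, blockOp_apply, map_neg, hDK', add_neg_cancel, map_zero, add_zero,
      id_apply, Prod.mk.injEq] at h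
    simpa [sub_eq_add_neg] using h.1
  · ext x
    have h := congr($hST (x, 0))
    simp only [comp_apply, blockOp_apply, map_zero, add_zero, id_apply, Prod.mk.injEq] at h
    have hKC : K (C (P x)) = -π x := by
      rw [eq_neg_of_add_eq_zero_left h.2, map_neg, ← comp_apply K D, hKD, id_apply]
    simp [hKC, h.1]

theorem comp_eq_id_of_blockOp_inverse_of_smul
    (hTS : blockOp P j π 0 ∘L blockOp A B C D = .id 𝕜 _)
    (hST : blockOp A B C D ∘L blockOp P j π 0 = .id 𝕜 _) {K : F₀ →L[𝕜] E₀} {c : 𝕜} (hc : c ≠ 0)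
    (hDK : D ∘L K = c • .id 𝕜 _) (hKD : K ∘L D = c • .id 𝕜 _) :
    P ∘L (A + c⁻¹ • -(B ∘L K ∘L C)) = .id 𝕜 _ ∧ (A + c⁻¹ • -(B ∘L K ∘L C)) ∘L P = .id 𝕜 _ := by
  have hscaled : A + c⁻¹ • -(B ∘L K ∘L C) = A - B ∘L (c⁻¹ • K) ∘L C := by
    simp [sub_eq_add_neg]
  rw [hscaled]
  refine comp_eq_id_of_blockOp_inverse hTS hST ?_ ?_
  · rw [comp_smul, hDK, smul_smul, inv_mul_cancel₀ hc, one_smul]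
  · rw [smul_comp, hKD, smul_smul, inv_mul_cancel₀ hc, one_smul]

end Block

section Matrix

variable {𝕜 : Type*} [NontriviallyNormedField 𝕜] {Z : Type*} [NormedAddCommGroup Z]
  [NormedSpace 𝕜 Z] {V : Set Z} {ι κ : Type*} [Fintype ι] [DecidableEq ι] [Fintype κ]

theorem AnalyticOnNhd.matrix_det {M : Z → Matrix ι ι 𝕜}
    (hM : ∀ i j, AnalyticOnNhd 𝕜 (fun s => M s i j) V) :
    AnalyticOnNhd 𝕜 (fun s => (M s).det) V := by
  simp only [Matrix.det_apply']
  exact Finset.analyticOnNhd_fun_sum _ fun σ _ =>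
    analyticOnNhd_const.mul (Finset.analyticOnNhd_fun_prod _ fun i _ => hM (σ i) i)

theorem AnalyticOnNhd.matrix_adjugate {M : Z → Matrix ι ι 𝕜}
    (hM : ∀ i j, AnalyticOnNhd 𝕜 (fun s => M s i j) V) (i j : ι) :
    AnalyticOnNhd 𝕜 (fun s => (M s).adjugate i j) V := by
  simp only [Matrix.adjugate_apply]
  refine AnalyticOnNhd.matrix_det fun k l => ?_
  by_cases hk : k = j
  · simpa [hk] using analyticOnNhd_const
  · simpa [Matrix.updateRow_ne hk] using hM k l

variable [CompleteSpace 𝕜] {X Y : Type*} [NormedAddCommGroup X] [NormedSpace 𝕜 X]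
  [NormedAddCommGroup Y] [NormedSpace 𝕜 Y]

theorem AnalyticOnNhd.toMatrix_apply [FiniteDimensional 𝕜 Y] {D : Z → X →L[𝕜] Y}
    (hD : AnalyticOnNhd 𝕜 D V) (bX : Basis ι 𝕜 X) (bY : Basis κ 𝕜 Y) (i : κ) (j : ι) :
    AnalyticOnNhd 𝕜 (fun s => LinearMap.toMatrix bX bY (D s) i j) V := fun s hs => by
  simp only [LinearMap.toMatrix_apply, coe_coe, ← Basis.coord_apply,
    ← LinearMap.coe_toContinuousLinearMap' (bY.coord i)]
  exact analyticAt_const.clm_apply ((hD s hs).clm_apply analyticAt_const)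

theorem AnalyticOnNhd.toLin [DecidableEq κ] [FiniteDimensional 𝕜 X] (bX : Basis ι 𝕜 X)
    (bY : Basis κ 𝕜 Y) {M : Z → Matrix κ ι 𝕜} (hM : ∀ i j, AnalyticOnNhd 𝕜 (fun s => M s i j) V) :
    AnalyticOnNhd 𝕜 (fun s => LinearMap.toContinuousLinearMap (Matrix.toLin bX bY (M s))) V := by
  have hsum : ∀ s, LinearMap.toContinuousLinearMap (Matrix.toLin bX bY (M s)) =
      ∑ i, ∑ j, M s i j •
        LinearMap.toContinuousLinearMap (Matrix.toLin bX bY (Matrix.single i j 1)) := by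
    intro s
    conv_lhs => rw [Matrix.matrix_eq_sum_single (M s)]
    simp only [map_sum, ← map_smul, Matrix.smul_single, smul_eq_mul, mul_one]
  simp only [hsum]
  exact Finset.analyticOnNhd_fun_sum _ fun i _ => Finset.analyticOnNhd_fun_sum _ fun j _ =>
    (hM i j).smul analyticOnNhd_const

theorem exists_analyticOnNhd_adjugate [FiniteDimensional 𝕜 X] [FiniteDimensional 𝕜 Y]
    {D : Z → X →L[𝕜] Y} (hD : AnalyticOnNhd 𝕜 D V) :
    ∃ (f : Z → 𝕜) (K : Z → Y →L[𝕜] X), AnalyticOnNhd 𝕜 f V ∧ AnalyticOnNhd 𝕜 K V ∧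
      ∀ s, D s ∘L K s = f s • .id 𝕜 Y ∧ K s ∘L D s = f s • .id 𝕜 X ∧
        (Function.Bijective (D s) → f s ≠ 0) := by
  by_cases hdim : finrank 𝕜 X = finrank 𝕜 Y
  case neg =>
    refine ⟨0, 0, analyticOnNhd_const, analyticOnNhd_const, fun s => ⟨by simp, by simp, ?_⟩⟩
    exact fun hD => absurd (LinearEquiv.ofBijective (D s : X →ₗ[𝕜] Y) hD).finrank_eq hdim
  case pos =>
    let bX := finBasis 𝕜 X
    let bY := finBasisOfFinrankEq 𝕜 Y hdim.symm
    let M s := LinearMap.toMatrix bX bY (D s)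
    have hM : ∀ i j, AnalyticOnNhd 𝕜 (fun s => M s i j) V := hD.toMatrix_apply bX bY
    have hDM : ∀ s, (D s : X →ₗ[𝕜] Y) = Matrix.toLin bX bY (M s) :=
      fun s => (Matrix.toLin_toMatrix bX bY _).symm
    refine ⟨fun s => (M s).det,
      fun s => LinearMap.toContinuousLinearMap (Matrix.toLin bY bX (M s).adjugate),
      AnalyticOnNhd.matrix_det hM, AnalyticOnNhd.toLin bY bX (AnalyticOnNhd.matrix_adjugate hM),
      fun s => ⟨?_, ?_, fun hbij => ?_⟩⟩
    · apply coe_injective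
      simp [hDM, ← Matrix.toLin_mul, Matrix.mul_adjugate]
    · apply coe_injective
      simp [hDM, ← Matrix.toLin_mul, Matrix.adjugate_mul]
    · let e := LinearEquiv.ofBijective (D s : X →ₗ[𝕜] Y) hbij
      have hinv : M s * LinearMap.toMatrix bY bX e.symm = 1 := by
        rw [← LinearMap.toMatrix_comp, show (D s : X →ₗ[𝕜] Y) ∘ₗ e.symm = LinearMap.id from
          LinearMap.ext e.apply_symm_apply, LinearMap.toMatrix_id]
      exact (Matrix.isUnit_det_of_right_inverse hinv).ne_zero

end Matrix

section LocalStructure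

variable {𝕜 : Type*} [RCLike 𝕜] {Z E F : Type*} [NormedAddCommGroup Z] [NormedSpace 𝕜 Z]
  [NormedAddCommGroup E] [NormedSpace 𝕜 E] [CompleteSpace E]
  [NormedAddCommGroup F] [NormedSpace 𝕜 F] [CompleteSpace F]

theorem exists_local_inverse_formula {U : Set Z} (hU : IsOpen U) {P : Z → E →L[𝕜] F}
    (hP : AnalyticOnNhd 𝕜 P U) {s₁ : Z} (hs₁ : s₁ ∈ U)
    (hker : FiniteDimensional 𝕜 (LinearMap.ker (P s₁ : E →ₗ[𝕜] F)))
    (hcoker : FiniteDimensional 𝕜 (F ⧸ LinearMap.range (P s₁ : E →ₗ[𝕜] F))) :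
    ∃ V : Set Z, IsOpen V ∧ s₁ ∈ V ∧ V ⊆ U ∧ IsPreconnected V ∧
      ∃ (f : Z → 𝕜) (H R : Z → F →L[𝕜] E),
        AnalyticOnNhd 𝕜 f V ∧ AnalyticOnNhd 𝕜 H V ∧ AnalyticOnNhd 𝕜 R V ∧
        (∀ s, FiniteDimensional 𝕜 (LinearMap.range (R s : F →ₗ[𝕜] E))) ∧
        (∀ s ∈ V, Function.Bijective (P s) ↔ f s ≠ 0) ∧
        ∀ s ∈ V, f s ≠ 0 →
          P s ∘L (H s + (f s)⁻¹ • R s) = .id 𝕜 F ∧ (H s + (f s)⁻¹ • R s) ∘L P s = .id 𝕜 E := by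
  obtain ⟨π, hπ⟩ := Submodule.ClosedComplemented.of_finiteDimensional
    (LinearMap.ker (P s₁ : E →ₗ[𝕜] F))
  obtain ⟨W, hW⟩ := Submodule.exists_isCompl (LinearMap.range (P s₁ : E →ₗ[𝕜] F))
  have : FiniteDimensional 𝕜 W := (Submodule.quotientEquivOfIsCompl _ _ hW).finiteDimensional
  let T s := blockOp (P s) W.subtypeL π 0
  have hT : AnalyticOnNhd 𝕜 T U := fun s hs => by have := hP s hs; fun_prop
  have hTbij := bijective_blockOp_of_isCompl hW hπ
  have hTinv : (T s₁).IsInvertible := ⟨ContinuousLinearEquiv.ofBijective (T s₁)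
    (LinearMap.ker_eq_bot.2 hTbij.1) (LinearMap.range_eq_top.2 hTbij.2), rfl⟩
  obtain ⟨ε, hε, hVU, hinvV, hS⟩ := exists_ball_analyticOnNhd_inverse hU hT hs₁ hTinv
  set V := Metric.ball s₁ ε
  let S s := (T s).inverse
  let A s := fst 𝕜 E W ∘L S s ∘L inl 𝕜 F _
  let B s := fst 𝕜 E W ∘L S s ∘L inr 𝕜 F _
  let C s := snd 𝕜 E W ∘L S s ∘L inl 𝕜 F _
  let D s := snd 𝕜 E W ∘L S s ∘L inr 𝕜 F _
  have hblock : ∀ s ∈ V, T s ∘L blockOp (A s) (B s) (C s) (D s) = .id 𝕜 _ ∧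
      blockOp (A s) (B s) (C s) (D s) ∘L T s = .id 𝕜 _ := fun s hs => by
    rw [← eq_blockOp]
    exact ⟨(hinvV s hs).self_comp_inverse, (hinvV s hs).inverse_comp_self⟩
  obtain ⟨f, K, hf, hK, hfK⟩ :=
    exists_analyticOnNhd_adjugate (D := D) fun s hs => by have := hS s hs; fun_prop
  have hinverse : ∀ s ∈ V, f s ≠ 0 → P s ∘L (A s + (f s)⁻¹ • -(B s ∘L K s ∘L C s)) = .id 𝕜 F ∧
      (A s + (f s)⁻¹ • -(B s ∘L K s ∘L C s)) ∘L P s = .id 𝕜 E := fun s hs hfs =>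
    comp_eq_id_of_blockOp_inverse_of_smul (hblock s hs).1 (hblock s hs).2 hfs (hfK s).1 (hfK s).2.1
  let _ : NormedSpace ℝ Z := NormedSpace.restrictScalars ℝ 𝕜 Z
  refine ⟨V, Metric.isOpen_ball, Metric.mem_ball_self hε, hVU, (convex_ball s₁ ε).isPreconnected,
    f, A, fun s => -(B s ∘L K s ∘L C s), hf, fun s hs => by have := hS s hs; fun_prop,
    fun s hs => by have := hS s hs; have := hK s hs; fun_prop, fun s => ?_,
    fun s hs => ⟨fun hPs => ?_, fun hfs => ?_⟩, hinverse⟩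
  · have hle : LinearMap.range (-(B s ∘L K s ∘L C s) : F →ₗ[𝕜] E) ≤
        LinearMap.range (B s : LinearMap.ker (P s₁ : E →ₗ[𝕜] F) →ₗ[𝕜] E) := by
      rintro _ ⟨y, rfl⟩
      exact ⟨-K s (C s y), by simp⟩
    exact Submodule.finiteDimensional_of_le hle
  · exact (hfK s).2.2 (bijective_of_blockOp_inverse (hblock s hs).1 (hblock s hs).2 hPs)
  · exact (IsInvertible.of_inverse (hinverse s hs hfs).1 (hinverse s hs hfs).2).bijective

end LocalStructure

theorem IsPreconnected.subset_closure_of_locally_iff_ne_zero {𝕜 : Type*}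
    [NontriviallyNormedField 𝕜] {Z G : Type*} [NormedAddCommGroup Z] [NormedSpace 𝕜 Z]
    [NormedAddCommGroup G] [NormedSpace 𝕜 G] {U : Set Z} (hU : IsPreconnected U) {p : Z → Prop}
    (hloc : ∀ t ∈ U, ∃ V : Set Z, IsOpen V ∧ t ∈ V ∧ IsPreconnected V ∧
      ∃ f : Z → G, AnalyticOnNhd 𝕜 f V ∧ ∀ s ∈ V, p s ↔ f s ≠ 0)
    {s₀ : Z} (hs₀ : s₀ ∈ U) (hp : p s₀) : U ⊆ closure {s | p s} := by
  set O := interior {s | ¬ p s}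
  have hclosed : U ∩ closure O ⊆ O := by
    rintro t ⟨htU, htO⟩
    obtain ⟨V, hVo, htV, hVc, f, hf, hpf⟩ := hloc t htU
    obtain ⟨u, huV, huO⟩ := mem_closure_iff.1 htO V hVo htV
    have hfu : f =ᶠ[𝓝 u] 0 := by
      filter_upwards [hVo.mem_nhds huV, isOpen_interior.mem_nhds huO] with s hsV hsO
      exact not_not.1 fun h => interior_subset hsO ((hpf s hsV).2 h)
    have hf0 := hf.eqOn_zero_of_preconnected_of_eventuallyEq_zero hVc huV hfu
    exact mem_interior.2 ⟨V, fun s hs hps => (hpf s hs).1 hps (hf0 hs), hVo, htV⟩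
  have hsub : U ⊆ (closure O)ᶜ := by
    refine hU.subset_left_of_subset_union isClosed_closure.isOpen_compl isOpen_interior
      (disjoint_compl_left.mono_right subset_closure) (fun t ht => ?_)
      ⟨s₀, hs₀, fun h => interior_subset (hclosed ⟨hs₀, h⟩) hp⟩
    by_cases h : t ∈ closure O
    · exact Or.inr (hclosed ⟨ht, h⟩)
    · exact Or.inl h
  intro t ht
  rw [mem_closure_iff_frequently]
  exact mt mem_interior_iff_mem_nhds.2 fun h => hsub ht (subset_closure h)

theorem stmt7_general {E F : Type*}
    [NormedAddCommGroup E] [NormedSpace ℂ E] [CompleteSpace E]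
    [NormedAddCommGroup F] [NormedSpace ℂ F] [CompleteSpace F]
    {n : ℕ}
    (U : Set (Fin n → ℂ)) (hUopen : IsOpen U)
    (hUconn : IsConnected U)
    (P : (Fin n → ℂ) → (E →L[ℂ] F)) (hP : AnalyticOnNhd ℂ P U)
    (hFred : ∀ s ∈ U, FiniteDimensional ℂ (LinearMap.ker (P s : E →ₗ[ℂ] F)) ∧
        IsClosed ((LinearMap.range (P s : E →ₗ[ℂ] F) : Submodule ℂ F) : Set F) ∧
        FiniteDimensional ℂ (F ⧸ LinearMap.range (P s : E →ₗ[ℂ] F)))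
    (s₀ : Fin n → ℂ) (hs₀ : s₀ ∈ U) (hbij : Function.Bijective (P s₀)) :
    ∀ s₁ ∈ U, ∃ V : Set (Fin n → ℂ), IsOpen V ∧ s₁ ∈ V ∧ V ⊆ U ∧
      ∃ f : (Fin n → ℂ) → ℂ, AnalyticOnNhd ℂ f V ∧ (∃ s ∈ V, f s ≠ 0) ∧
        {s ∈ U | ¬ Function.Bijective (P s)} ∩ V = {s ∈ V | f s = 0} ∧
        ∃ H R : (Fin n → ℂ) → (F →L[ℂ] E),
          AnalyticOnNhd ℂ H V ∧ AnalyticOnNhd ℂ R V ∧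
          (∀ s ∈ V, FiniteDimensional ℂ (LinearMap.range (R s : F →ₗ[ℂ] E))) ∧
          (∀ s ∈ V, f s ≠ 0 →
            (P s).comp (H s + (f s)⁻¹ • R s) = ContinuousLinearMap.id ℂ F ∧
            (H s + (f s)⁻¹ • R s).comp (P s) = ContinuousLinearMap.id ℂ E) := by
  have hdense : U ⊆ closure {s | Function.Bijective (P s)} := by
    refine hUconn.isPreconnected.subset_closure_of_locally_iff_ne_zero (𝕜 := ℂ) (G := ℂ)
      (fun t ht => ?_) hs₀ hbij
    obtain ⟨V, hVo, htV, -, hVc, f, -, -, hf, -, -, -, hiff, -⟩ :=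
      exists_local_inverse_formula hUopen hP ht (hFred t ht).1 (hFred t ht).2.2
    exact ⟨V, hVo, htV, hVc, f, hf, hiff⟩
  intro s₁ hs₁
  obtain ⟨V, hVo, hs₁V, hVU, -, f, H, R, hf, hH, hR, hRfin, hiff, hinv⟩ :=
    exists_local_inverse_formula hUopen hP hs₁ (hFred s₁ hs₁).1 (hFred s₁ hs₁).2.2
  obtain ⟨s, hsV, hs⟩ := mem_closure_iff_nhds.1 (hdense hs₁) V (hVo.mem_nhds hs₁V)
  refine ⟨V, hVo, hs₁V, hVU, f, hf, ⟨s, hsV, (hiff s hsV).1 hs⟩, ?_, H, R, hH, hR,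
    fun s _ => hRfin s, hinv⟩
  exact Set.ext fun s => ⟨fun ⟨⟨_, hs⟩, hsV⟩ => ⟨hsV, not_not.1 (mt (hiff s hsV).2 hs)⟩,
    fun ⟨hsV, hs⟩ => ⟨⟨hVU hsV, fun h => (hiff s hsV).1 h hs⟩, hsV⟩⟩

/-- Multivariable analytic Fredholm theorem, part II (local structure of the inverse).
With `P : U → L(E, F)` an analytic family of Fredholm operators on a nonempty connected
open `U ⊆ ℂⁿ`, invertible at some `s₀ ∈ U`, and `S` the non-invertibility set: for every
`s₁ ∈ U` there are an open neighborhood `V ⊆ U`, a holomorphic `f : V → ℂ` not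
identically zero with `S ∩ V = f⁻¹(0)`, and analytic families `H, R : V → L(F, E)` with
`R(s)` of finite rank, such that `H(s) + f(s)⁻¹·R(s)` is a two-sided inverse of `P(s)`
whenever `f(s) ≠ 0`. -/
theorem stmt7 {E F : Type*}
    [NormedAddCommGroup E] [NormedSpace ℂ E] [CompleteSpace E]
    [NormedAddCommGroup F] [NormedSpace ℂ F] [CompleteSpace F]
    {n : ℕ} (hn : 1 ≤ n)
    (U : Set (Fin n → ℂ)) (hUopen : IsOpen U) (hUne : U.Nonempty)
    (hUconn : IsConnected U)
    (P : (Fin n → ℂ) → (E →L[ℂ] F)) (hP : AnalyticOnNhd ℂ P U)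
    (hFred : ∀ s ∈ U, FiniteDimensional ℂ (LinearMap.ker (P s : E →ₗ[ℂ] F)) ∧
        IsClosed ((LinearMap.range (P s : E →ₗ[ℂ] F) : Submodule ℂ F) : Set F) ∧
        FiniteDimensional ℂ (F ⧸ LinearMap.range (P s : E →ₗ[ℂ] F)))
    (s₀ : Fin n → ℂ) (hs₀ : s₀ ∈ U) (hbij : Function.Bijective (P s₀)) :
    ∀ s₁ ∈ U, ∃ V : Set (Fin n → ℂ), IsOpen V ∧ s₁ ∈ V ∧ V ⊆ U ∧
      ∃ f : (Fin n → ℂ) → ℂ, AnalyticOnNhd ℂ f V ∧ (∃ s ∈ V, f s ≠ 0) ∧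
        {s ∈ U | ¬ Function.Bijective (P s)} ∩ V = {s ∈ V | f s = 0} ∧
        ∃ H R : (Fin n → ℂ) → (F →L[ℂ] E),
          AnalyticOnNhd ℂ H V ∧ AnalyticOnNhd ℂ R V ∧
          (∀ s ∈ V, FiniteDimensional ℂ (LinearMap.range (R s : F →ₗ[ℂ] E))) ∧
          (∀ s ∈ V, f s ≠ 0 →
            (P s).comp (H s + (f s)⁻¹ • R s) = ContinuousLinearMap.id ℂ F ∧
            (H s + (f s)⁻¹ • R s).comp (P s) = ContinuousLinearMap.id ℂ E) :=
  stmt7_general U hUopen hUconn P hP hFred s₀ hs₀ hbij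
end

section
/- Let W₀ be the subgroup of the orthogonal group of V generated by the reflections s_α with α ∈ Δ⁰. Then: W₀ is finite; every w ∈ W₀ fixes A pointwise and maps each of the sets Δ⁺, Δ⁰, Δ⁻ onto itself; the orthogonal projection π_A onto A equals the average (1/|W₀|)·Σ_{w ∈ W₀} w; and consequently, if X ∈ V satisfies ⟨α, X⟩ > 0 for every α ∈ Δ⁺, then ⟨α, π_A(X)⟩ > 0 for every α ∈ Δ⁺. -/
/-!
Each generator `s_α`, `α ∈ Δ⁰`, fixes `A = (span Δ⁰)ᗮ` pointwise, and a vector fixed by all of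
them lies in `A`: `A` is exactly the fixed space of `W₀`. Each generator also permutes the finite
set `Δ`, and `span Δ ⊔ A = V`, so an element of `W₀` is determined by the permutation it induces
on `Δ`; hence `W₀` is finite. As `H₀ ∈ A` is fixed, `⟪w α, H₀⟫ = ⟪α, H₀⟫`, so `W₀` preserves
`Δ⁺`, `Δ⁰`, `Δ⁻`. The orbit average of `v` is `W₀`-invariant, hence in `A`, and `v` minus it is
orthogonal to `A` because the isometries of `W₀` fix `A`; so it is `π_A v`. Finally
`⟪α, π_A X⟫ = |W₀|⁻¹ ∑ ⟪w⁻¹ α, X⟫`, a mean of values of `X` on `Δ⁺`.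
-/

open RealInnerProductSpace Finset

section FiniteIsometryGroup

variable {V : Type*} [NormedAddCommGroup V] [InnerProductSpace ℝ V]

theorem LinearIsometryEquiv.image_setOf_mem_and_inner {s : Set V} (w : V ≃ₗᵢ[ℝ] V)
    (hs : w '' s = s) {H : V} (hH : w H = H) (P : ℝ → Prop) :
    w '' {a | a ∈ s ∧ P ⟪a, H⟫} = {a | a ∈ s ∧ P ⟪a, H⟫} := by
  have hinner (a : V) : ⟪w a, H⟫ = ⟪a, H⟫ := by rw [← w.inner_map_map a H, hH]
  ext b
  constructor
  · rintro ⟨a, ⟨ha, hP⟩, rfl⟩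
    exact ⟨hs ▸ Set.mem_image_of_mem w ha, (hinner a).symm ▸ hP⟩
  · rintro ⟨hb, hP⟩
    obtain ⟨a, ha, rfl⟩ := hs.symm ▸ hb
    exact ⟨a, ⟨ha, hinner a ▸ hP⟩, rfl⟩

theorem Subgroup.finite_of_mapsTo_of_apply_eq_self {G : Subgroup (V ≃ₗᵢ[ℝ] V)} {s : Set V}
    (hs : s.Finite) {K : Submodule ℝ V} (hsK : Submodule.span ℝ s ⊔ K = ⊤)
    (hmaps : ∀ w ∈ G, Set.MapsTo w s s) (hfix : ∀ w ∈ G, ∀ v ∈ K, w v = v) :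
    (G : Set (V ≃ₗᵢ[ℝ] V)).Finite := by
  have : Finite s := hs
  refine Set.finite_coe_iff.mp <| Finite.of_injective
    (fun w : G => (hmaps w.1 w.2).restrict) fun w₁ w₂ h => Subtype.ext ?_
  have hspan : Submodule.span ℝ (s ∪ K) = ⊤ := by
    rwa [Submodule.span_union, Submodule.span_eq]
  have hext := LinearMap.ext_on hspan (f := w₁.1.toLinearMap) (g := w₂.1.toLinearMap) <| by
    rintro v (hv | hv)
    · exact congrArg Subtype.val (congrFun h ⟨v, hv⟩)
    · exact (hfix _ w₁.2 v hv).trans (hfix _ w₂.2 v hv).symm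
  exact LinearIsometryEquiv.ext (LinearMap.congr_fun hext)

theorem Subgroup.card_toFinset_pos {G : Subgroup (V ≃ₗᵢ[ℝ] V)}
    (hG : (G : Set (V ≃ₗᵢ[ℝ] V)).Finite) : (0 : ℝ) < #hG.toFinset := by
  exact_mod_cast Finset.card_pos.mpr ⟨1, hG.mem_toFinset.mpr G.one_mem⟩

variable {G : Subgroup (V ≃ₗᵢ[ℝ] V)} (hG : (G : Set (V ≃ₗᵢ[ℝ] V)).Finite)

noncomputable def orbitAverage (v : V) : V :=
  (#hG.toFinset : ℝ)⁻¹ • ∑ w ∈ hG.toFinset, w v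

theorem apply_orbitAverage {w₀ : V ≃ₗᵢ[ℝ] V} (hw₀ : w₀ ∈ G) (v : V) :
    w₀ (orbitAverage hG v) = orbitAverage hG v := by
  rw [orbitAverage, map_smul, map_sum]
  congr 1
  exact Finset.sum_equiv (Equiv.mulLeft w₀)
    (fun w => by simp [Subgroup.mul_mem_cancel_left G hw₀]) fun _ _ => rfl

theorem inner_orbitAverage_of_forall_apply_eq_self (v : V) {u : V}
    (hu : ∀ w ∈ G, w u = u) : ⟪orbitAverage hG v, u⟫ = ⟪v, u⟫ := by
  have hterm : ∀ w ∈ hG.toFinset, ⟪w v, u⟫ = ⟪v, u⟫ := fun w hw => by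
    rw [← w.inner_map_map v u, hu w (hG.mem_toFinset.mp hw)]
  rw [orbitAverage, real_inner_smul_left, sum_inner, Finset.sum_congr rfl hterm,
    Finset.sum_const, nsmul_eq_mul, inv_mul_cancel_left₀ (Subgroup.card_toFinset_pos hG).ne']

theorem starProjection_eq_orbitAverage {K : Submodule ℝ V} [K.HasOrthogonalProjection]
    (hfix : ∀ w ∈ G, ∀ v ∈ K, w v = v) (hK : ∀ v, (∀ w ∈ G, w v = v) → v ∈ K) (v : V) :
    K.starProjection v = orbitAverage hG v :=
  Submodule.eq_starProjection_of_mem_of_inner_eq_zero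
    (hK _ fun _ hw => apply_orbitAverage hG hw v) fun u hu => by
      rw [inner_sub_left, inner_orbitAverage_of_forall_apply_eq_self hG v
        fun w hw => hfix w hw u hu, sub_self]

theorem inner_orbitAverage_pos {P : Set V} (hP : ∀ w ∈ G, Set.MapsTo w P P) {X : V}
    (hX : ∀ a ∈ P, 0 < ⟪a, X⟫) {a : V} (ha : a ∈ P) : 0 < ⟪a, orbitAverage hG X⟫ := by
  rw [orbitAverage, real_inner_smul_right, inner_sum]
  refine mul_pos (inv_pos.mpr (Subgroup.card_toFinset_pos hG)) (Finset.sum_pos (fun w hw => ?_)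
    ⟨1, hG.mem_toFinset.mpr G.one_mem⟩)
  have hwG := hG.mem_toFinset.mp hw
  rw [← w.apply_symm_apply a, w.inner_map_map]
  exact hX _ (hP _ (inv_mem hwG) ha)

end FiniteIsometryGroup

section ReflectionSubgroup

variable {V : Type*} [NormedAddCommGroup V] [InnerProductSpace ℝ V]

theorem Submodule.reflection_orthogonal_span_singleton_apply (α β : V) :
    (ℝ ∙ α)ᗮ.reflection β = β - (2 * ⟪β, α⟫ / ⟪α, α⟫) • α := by
  rw [reflection_orthogonal_apply, reflection_singleton_apply, real_inner_self_eq_norm_sq,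
    real_inner_comm β α]
  simp only [RCLike.ofReal_real_eq_id, id_eq]
  module

theorem Submodule.iInf_orthogonal_span_singleton (S : Set V) :
    ⨅ α ∈ S, (ℝ ∙ α)ᗮ = (span ℝ S)ᗮ := by
  rw [span_eq_iSup_of_singleton_spans]
  exact (orthogonal_gc ℝ V).l_iSup₂.symm

def reflectionSubgroup (S : Set V) : Subgroup (V ≃ₗᵢ[ℝ] V) :=
  Subgroup.closure ((fun α => (ℝ ∙ α)ᗮ.reflection) '' S)

variable {S : Set V} {w : V ≃ₗᵢ[ℝ] V}

theorem reflectionSubgroup_apply_eq_self (hw : w ∈ reflectionSubgroup S) {v : V}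
    (hv : v ∈ ⨅ α ∈ S, (ℝ ∙ α)ᗮ) : w v = v := by
  simp only [Submodule.mem_iInf] at hv
  induction hw using Subgroup.closure_induction'' with
  | mem _ hσ | inv_mem _ hσ =>
    obtain ⟨α, hα, rfl⟩ := hσ
    exact Submodule.reflection_mem_subspace_eq_self (hv α hα)
  | one => rfl
  | mul _ _ _ _ ihx ihy => rw [LinearIsometryEquiv.coe_mul, Function.comp_apply, ihy, ihx]

theorem mem_iInf_orthogonal_of_forall_apply_eq_self {v : V}
    (hv : ∀ w ∈ reflectionSubgroup S, w v = v) : v ∈ ⨅ α ∈ S, (ℝ ∙ α)ᗮ := by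
  simp only [Submodule.mem_iInf]
  intro α hα
  rw [← Submodule.reflection_eq_self_iff]
  exact hv _ (Subgroup.subset_closure ⟨α, hα, rfl⟩)

theorem reflectionSubgroup_mapsTo {s : Set V} (hs : ∀ α ∈ S, ∀ β ∈ s, (ℝ ∙ α)ᗮ.reflection β ∈ s)
    (hw : w ∈ reflectionSubgroup S) : Set.MapsTo w s s := by
  induction hw using Subgroup.closure_induction'' with
  | mem _ hσ | inv_mem _ hσ =>
    obtain ⟨α, hα, rfl⟩ := hσ
    exact hs α hα
  | one => exact Set.mapsTo_id s
  | mul _ _ _ _ ihx ihy => rw [LinearIsometryEquiv.coe_mul]; exact ihx.comp ihy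

theorem reflectionSubgroup_image_eq {s : Set V}
    (hs : ∀ α ∈ S, ∀ β ∈ s, (ℝ ∙ α)ᗮ.reflection β ∈ s) (hw : w ∈ reflectionSubgroup S) :
    w '' s = s :=
  (reflectionSubgroup_mapsTo hs hw).image_subset.antisymm fun β hβ =>
    ⟨w⁻¹ β, reflectionSubgroup_mapsTo hs (inv_mem hw) hβ, w.apply_symm_apply β⟩

theorem Submodule.span_sup_iInf_orthogonal_eq_top [FiniteDimensional ℝ V] {s : Set V}
    (hSs : S ⊆ s) : span ℝ s ⊔ ⨅ α ∈ S, (ℝ ∙ α)ᗮ = ⊤ := by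
  rw [iInf_orthogonal_span_singleton]
  exact eq_top_mono (sup_le_sup_right (span_mono hSs) _) sup_orthogonal_of_hasOrthogonalProjection

theorem reflectionSubgroup_finite [FiniteDimensional ℝ V] {s : Set V} (hs : s.Finite)
    (hSs : S ⊆ s) (hstable : ∀ α ∈ S, ∀ β ∈ s, (ℝ ∙ α)ᗮ.reflection β ∈ s) :
    (reflectionSubgroup S : Set (V ≃ₗᵢ[ℝ] V)).Finite :=
  Subgroup.finite_of_mapsTo_of_apply_eq_self hs (Submodule.span_sup_iInf_orthogonal_eq_top hSs)
    (fun _ => reflectionSubgroup_mapsTo hstable) fun _ => reflectionSubgroup_apply_eq_self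

theorem starProjection_iInf_orthogonal_eq_orbitAverage [FiniteDimensional ℝ V]
    (hG : (reflectionSubgroup S : Set (V ≃ₗᵢ[ℝ] V)).Finite) (v : V) :
    (⨅ α ∈ S, (ℝ ∙ α)ᗮ).starProjection v = orbitAverage hG v :=
  starProjection_eq_orbitAverage hG (fun _ => reflectionSubgroup_apply_eq_self)
    (fun _ => mem_iInf_orthogonal_of_forall_apply_eq_self) v

end ReflectionSubgroup

theorem stmt13_general {V : Type*} [NormedAddCommGroup V] [InnerProductSpace ℝ V]
    [FiniteDimensional ℝ V]
    (Δ : Finset V)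
    (hrefl : ∀ α ∈ Δ, ∀ β ∈ Δ, β - (2 * ⟪β, α⟫ / ⟪α, α⟫) • α ∈ Δ)
    (H₀ : V) (A : Submodule ℝ V)
    (hA : A = ⨅ α ∈ {a : V | a ∈ Δ ∧ ⟪a, H₀⟫ = 0}, (Submodule.span ℝ {α})ᗮ)
    (W₀ : Subgroup (V ≃ₗᵢ[ℝ] V))
    (hW₀ : W₀ = Subgroup.closure
        {σ : V ≃ₗᵢ[ℝ] V | ∃ α : V, α ∈ Δ ∧ ⟪α, H₀⟫ = 0 ∧
          σ = Submodule.reflection (Submodule.span ℝ {α})ᗮ}) :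
    ∃ hfin : (W₀ : Set (V ≃ₗᵢ[ℝ] V)).Finite,
      (∀ w ∈ W₀, ∀ v ∈ A, w v = v) ∧
      (∀ w ∈ W₀,
        (fun v => w v) '' {a : V | a ∈ Δ ∧ 0 < ⟪a, H₀⟫} = {a : V | a ∈ Δ ∧ 0 < ⟪a, H₀⟫} ∧
        (fun v => w v) '' {a : V | a ∈ Δ ∧ ⟪a, H₀⟫ = 0} = {a : V | a ∈ Δ ∧ ⟪a, H₀⟫ = 0} ∧
        (fun v => w v) '' {a : V | a ∈ Δ ∧ ⟪a, H₀⟫ < 0} =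
          {a : V | a ∈ Δ ∧ ⟪a, H₀⟫ < 0}) ∧
      (∀ v : V, (Submodule.orthogonalProjectionOnto A v : V)
          = (hfin.toFinset.card : ℝ)⁻¹ • ∑ w ∈ hfin.toFinset, w v) ∧
      (∀ X : V, (∀ a ∈ Δ, 0 < ⟪a, H₀⟫ → 0 < ⟪a, X⟫) →
        ∀ a ∈ Δ, 0 < ⟪a, H₀⟫ → 0 < ⟪a, (Submodule.orthogonalProjectionOnto A X : V)⟫) := by
  set Δ₀ : Set V := {a : V | a ∈ Δ ∧ ⟪a, H₀⟫ = 0}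
  have hW : W₀ = reflectionSubgroup Δ₀ := by
    rw [hW₀, reflectionSubgroup]
    congr 1
    ext σ
    simp only [Set.mem_ofPred_eq, Set.mem_image, Δ₀, and_assoc, eq_comm]
  subst hW hA
  have hstable : ∀ α ∈ Δ₀, ∀ β ∈ (Δ : Set V), (ℝ ∙ α)ᗮ.reflection β ∈ (Δ : Set V) :=
    fun α hα β hβ => by
      rw [Submodule.reflection_orthogonal_span_singleton_apply]
      exact hrefl α hα.1 β hβ
  have hfin := reflectionSubgroup_finite Δ.finite_toSet (fun a ha => ha.1) hstable
  have hH₀ : H₀ ∈ ⨅ α ∈ Δ₀, (ℝ ∙ α)ᗮ := by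
    simp [Submodule.mem_iInf, Submodule.mem_orthogonal_singleton_iff_inner_right, Δ₀]
  have hsign {w} (hw : w ∈ reflectionSubgroup Δ₀) := w.image_setOf_mem_and_inner
    (reflectionSubgroup_image_eq hstable hw) (reflectionSubgroup_apply_eq_self hw hH₀)
  have hproj (v : V) : ((⨅ α ∈ Δ₀, (ℝ ∙ α)ᗮ).orthogonalProjectionOnto v : V) =
      orbitAverage hfin v := by
    rw [← Submodule.starProjection_apply]
    exact starProjection_iInf_orthogonal_eq_orbitAverage hfin v
  refine ⟨hfin, fun _ => reflectionSubgroup_apply_eq_self,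
    fun w hw => ⟨hsign hw (0 < ·), hsign hw (· = 0), hsign hw (· < 0)⟩, hproj,
    fun X hX a ha ha₀ => ?_⟩
  rw [hproj]
  exact inner_orbitAverage_pos hfin
    (fun _ hw => Set.mapsTo_iff_image_subset.mpr (hsign hw (0 < ·)).subset)
    (fun a ha => hX a ha.1 ha.2) (P := {a | a ∈ Δ ∧ 0 < ⟪a, H₀⟫}) ⟨ha, ha₀⟩

/-- Properties of the stabilizer Weyl group `W₀ = ⟨s_α : α ∈ Δ⁰⟩` generated by the
reflections in the roots orthogonal to `H₀`: it is finite, fixes `A = ⋂_{α∈Δ⁰} α^⊥`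
pointwise, permutes each of `Δ⁺, Δ⁰, Δ⁻`, its average over the group is the orthogonal
projection `π_A` onto `A`, and consequently `⟨α, X⟩ > 0` for all `α ∈ Δ⁺` implies
`⟨α, π_A X⟩ > 0` for all `α ∈ Δ⁺`. -/
theorem stmt13 {V : Type*} [NormedAddCommGroup V] [InnerProductSpace ℝ V]
    [FiniteDimensional ℝ V]
    (Δ : Finset V) (hΔ0 : (0 : V) ∉ Δ)
    (hrefl : ∀ α ∈ Δ, ∀ β ∈ Δ, β - (2 * ⟪β, α⟫ / ⟪α, α⟫) • α ∈ Δ)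
    (H₀ : V) (A : Submodule ℝ V)
    (hA : A = ⨅ α ∈ {a : V | a ∈ Δ ∧ ⟪a, H₀⟫ = 0}, (Submodule.span ℝ {α})ᗮ)
    (W₀ : Subgroup (V ≃ₗᵢ[ℝ] V))
    (hW₀ : W₀ = Subgroup.closure
        {σ : V ≃ₗᵢ[ℝ] V | ∃ α : V, α ∈ Δ ∧ ⟪α, H₀⟫ = 0 ∧
          σ = Submodule.reflection (Submodule.span ℝ {α})ᗮ}) :
    ∃ hfin : (W₀ : Set (V ≃ₗᵢ[ℝ] V)).Finite,
      (∀ w ∈ W₀, ∀ v ∈ A, w v = v) ∧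
      (∀ w ∈ W₀,
        (fun v => w v) '' {a : V | a ∈ Δ ∧ 0 < ⟪a, H₀⟫} = {a : V | a ∈ Δ ∧ 0 < ⟪a, H₀⟫} ∧
        (fun v => w v) '' {a : V | a ∈ Δ ∧ ⟪a, H₀⟫ = 0} = {a : V | a ∈ Δ ∧ ⟪a, H₀⟫ = 0} ∧
        (fun v => w v) '' {a : V | a ∈ Δ ∧ ⟪a, H₀⟫ < 0} =
          {a : V | a ∈ Δ ∧ ⟪a, H₀⟫ < 0}) ∧
      (∀ v : V, (Submodule.orthogonalProjectionOnto A v : V)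
          = (hfin.toFinset.card : ℝ)⁻¹ • ∑ w ∈ hfin.toFinset, w v) ∧
      (∀ X : V, (∀ a ∈ Δ, 0 < ⟪a, H₀⟫ → 0 < ⟪a, X⟫) →
        ∀ a ∈ Δ, 0 < ⟪a, H₀⟫ → 0 < ⟪a, (Submodule.orthogonalProjectionOnto A X : V)⟫) :=
  stmt13_general Δ hrefl H₀ A hA W₀ hW₀
end
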